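/- Let G be a simple graph in which every vertex has at most k neighbors, and let v be a vertex of G. If the graph obtained from G by deleting v (and all edges incident to v) has a proper edge coloring using k + 1 colors, then G has a proper edge coloring using k + 1 colors. -/

import Mathlib

/-- A proper edge coloring of a simple graph: distinct edges sharing an endpoint
get different colors. -/
def IsProperEdgeColoring {V α : Type*} (G : SimpleGraph V) (c : G.edgeSet → α) : Prop :=
  ∀ e₁ e₂ : G.edgeSet, e₁ ≠ e₂ →
    (∃ v, v ∈ (e₁ : Sym2 V) ∧ v ∈ (e₂ : Sym2 V)) → c e₁ ≠ c e₂

/-!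
A partial proper colouring with more colours than the maximum degree extends to any uncoloured
edge `x z` (Vizing's fan argument), so a partial colouring with the most coloured edges is total.
Fix a colour `φ v` missing at each vertex `v` and grow a maximal fan `z = y 0, …, y m` at `x`,
the edge `x (y (j + 1))` having colour `φ (y j)`. If `φ (y m)` is missing at `x`, rotating the fan
colours `x z`. Otherwise `φ (y m) = φ (y i)` for some `i < m`. Let `a` be missing at `x`: in the
subgraph of edges coloured `a` or `φ (y m)`, of maximum degree two, the vertices `x`, `y i`, `y m`
have degree at most one, so they do not all lie in one component. Swapping the two colours on the
component of `y i` or `y m` that avoids `x` makes `a` missing there, and rotating the fan up to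
that vertex colours `x z`.
-/

open Function Finset

theorem Option.map_swap_eq_some {α : Type*} [DecidableEq α] {o : Option α} {a b d : α} :
    o.map (Equiv.swap a b) = some d ↔ o = some (Equiv.swap a b d) := by
  cases o <;> simp [Equiv.swap_apply_eq_iff]

namespace SimpleGraph

variable {V α : Type*} {G : SimpleGraph V} {c : Sym2 V → Option α} {u w x : V} {a b d : α}

/-- A partial proper edge colouring: `c e = none` means that `e` is not coloured yet. -/
structure IsPartialEdgeColoring (G : SimpleGraph V) (c : Sym2 V → Option α) : Prop where
  mem_edgeSet {e : Sym2 V} : c e ≠ none → e ∈ G.edgeSet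
  eq_of_eq_some {u w w' : V} {a : α} : c s(u, w) = some a → c s(u, w') = some a → w = w'

def coloredEdges (c : Sym2 V → Option α) : Set (Sym2 V) := {e | c e ≠ none}

def IsMissingColor (c : Sym2 V → Option α) (u : V) (a : α) : Prop := ∀ w, c s(u, w) ≠ some a

theorem isPartialEdgeColoring_none : G.IsPartialEdgeColoring fun _ => (none : Option α) :=
  ⟨fun h => absurd rfl h, fun h => absurd h (Option.some_ne_none _).symm⟩

namespace IsPartialEdgeColoring

variable (hc : G.IsPartialEdgeColoring c)
include hc

theorem adj (h : c s(u, w) = some a) : G.Adj u w :=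
  hc.mem_edgeSet (h ▸ Option.some_ne_none a)

theorem exists_isMissingColor [Fintype V] [DecidableRel G.Adj] [Fintype α]
    (hu : G.degree u < Fintype.card α) : ∃ a, IsMissingColor c u a := by
  by_contra! h
  simp only [IsMissingColor, not_forall, not_not] at h
  choose w hw using h
  have hcard : #(univ : Finset α) ≤ #(G.neighborFinset u) :=
    card_le_card_of_injOn w (fun a _ => by simpa using hc.adj (hw a))
      (fun a _ b _ hab => Option.some_injective _ (by rw [← hw a, ← hw b, hab]))
  rw [card_univ, card_neighborFinset_eq_degree] at hcard
  omega

theorem update_none [DecidableEq V] (e : Sym2 V) : G.IsPartialEdgeColoring (update c e none) where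
  mem_edgeSet {e'} he' := by
    by_cases h : e' = e
    · simp [h] at he'
    · exact hc.mem_edgeSet (by rwa [update_of_ne h] at he')
  eq_of_eq_some {u w w' a} h h' := by
    by_cases hw : s(u, w) = e
    · simp [hw] at h
    by_cases hw' : s(u, w') = e
    · simp [hw'] at h'
    rw [update_of_ne hw] at h
    rw [update_of_ne hw'] at h'
    exact hc.eq_of_eq_some h h'

theorem update_some [DecidableEq V] (huw : G.Adj u w) (hu : IsMissingColor c u a)
    (hw : IsMissingColor c w a) : G.IsPartialEdgeColoring (update c s(u, w) (some a)) := by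
  have hmiss : ∀ p ∈ s(u, w), IsMissingColor c p a := by
    intro p hp
    rcases Sym2.mem_iff.1 hp with rfl | rfl
    exacts [hu, hw]
  refine ⟨fun {e} he => ?_, fun {p q q' d} h h' => ?_⟩
  · by_cases h : e = s(u, w)
    · exact h ▸ huw
    · exact hc.mem_edgeSet (by rwa [update_of_ne h] at he)
  by_cases hq : s(p, q) = s(u, w) <;> by_cases hq' : s(p, q') = s(u, w)
  · exact Sym2.congr_right.1 (hq.trans hq'.symm)
  · rw [hq, update_self, Option.some_inj] at h
    rw [update_of_ne hq', ← h] at h'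
    exact absurd h' (hmiss p (hq ▸ Sym2.mem_mk_left p q) q')
  · rw [hq', update_self, Option.some_inj] at h'
    rw [update_of_ne hq, ← h'] at h
    exact absurd h (hmiss p (hq' ▸ Sym2.mem_mk_left p q') q)
  · rw [update_of_ne hq] at h
    rw [update_of_ne hq'] at h'
    exact hc.eq_of_eq_some h h'

theorem isMissingColor_update_none [DecidableEq V] (h : c s(u, w) = some a) :
    IsMissingColor (update c s(u, w) none) u a := by
  intro w' hw'
  by_cases hw : s(u, w') = s(u, w)
  · simp [hw] at hw'
  · rw [update_of_ne hw] at hw'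
    exact hw (by rw [hc.eq_of_eq_some hw' h])

end IsPartialEdgeColoring

theorem IsMissingColor.update [DecidableEq V] {e : Sym2 V} {o : Option α}
    (h : IsMissingColor c u a) (ho : u ∈ e → o ≠ some a) : IsMissingColor (update c e o) u a := by
  intro w hw
  by_cases hwe : s(u, w) = e
  · rw [hwe, update_self] at hw
    exact ho (hwe ▸ Sym2.mem_mk_left u w) hw
  · rw [update_of_ne hwe] at hw
    exact h w hw

theorem insert_coloredEdges_subset_update [DecidableEq V] (e : Sym2 V) (a : α) :
    insert e (coloredEdges c) ⊆ coloredEdges (update c e (some a)) := by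
  rintro e' (rfl | he')
  · simp [coloredEdges]
  · by_cases h : e' = e
    · simp [coloredEdges, h]
    · show update c e (some a) e' ≠ none
      rwa [update_of_ne h]

def IsFan (c : Sym2 V → Option α) (φ : V → α) (x : V) (y : ℕ → V) (m : ℕ) : Prop :=
  Set.InjOn y (Set.Iic m) ∧ ∀ j < m, c s(x, y (j + 1)) = some (φ (y j))

variable {φ : V → α} {y : ℕ → V} {m : ℕ}

theorem IsFan.mono (hfan : IsFan c φ x y m) {n : ℕ} (hn : n ≤ m) : IsFan c φ x y n :=
  ⟨hfan.1.mono (Set.Iic_subset_Iic.2 hn), fun j hj => hfan.2 j (by omega)⟩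

theorem IsFan.ne_of_lt (hfan : IsFan c φ x y m) {i j : ℕ} (hij : i < j) (hj : j ≤ m) :
    y i ≠ y j :=
  fun h => hij.ne (hfan.1 (Set.mem_Iic.2 (hij.le.trans hj)) (Set.mem_Iic.2 hj) h)

theorem IsFan.apply_succ_ne (hfan : IsFan c φ x y m) (hc : G.IsPartialEdgeColoring c)
    {j : ℕ} (hj : j < m) : y (j + 1) ≠ x :=
  fun h => G.irrefl (h ▸ hc.adj (hfan.2 j hj))

/-- Rotating a fan: shift each colour `φ (y j)` from `x (y (j + 1))` down to `x (y j)`, then give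
the freed edge `x (y m)` the colour `a`, missing at both of its ends. -/
theorem IsPartialEdgeColoring.exists_extend_of_isFan [DecidableEq V]
    (hc : G.IsPartialEdgeColoring c) (hfan : IsFan c φ x y m)
    (hφ : ∀ j < m, IsMissingColor c (y j) (φ (y j))) (hxy : G.Adj x (y 0))
    (hx : IsMissingColor c x a) (hy : IsMissingColor c (y m) a) :
    ∃ c' : Sym2 V → Option α, G.IsPartialEdgeColoring c' ∧
      insert s(x, y 0) (coloredEdges c) ⊆ coloredEdges c' := by
  induction m generalizing c y with
  | zero => exact ⟨_, hc.update_some hxy hx hy, insert_coloredEdges_subset_update _ _⟩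
  | succ m ih =>
    have h1 : c s(x, y 1) = some (φ (y 0)) := hfan.2 0 m.succ_pos
    set c₁ := update (update c s(x, y 1) none) s(x, y 0) (some (φ (y 0)))
    have hc₁ : G.IsPartialEdgeColoring c₁ :=
      (hc.update_none _).update_some hxy (hc.isMissingColor_update_none h1)
        ((hφ 0 m.succ_pos).update fun _ => Option.some_ne_none _ |>.symm)
    have hnot : ∀ j ≤ m, y (j + 1) ∉ s(x, y 0) := fun j hj h => by
      rcases Sym2.mem_iff.1 h with h | h
      · exact hfan.apply_succ_ne hc (by omega) h
      · exact hfan.ne_of_lt j.succ_pos (by omega) h.symm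
    have hmiss : ∀ j ≤ m, ∀ d, IsMissingColor c (y (j + 1)) d →
        IsMissingColor c₁ (y (j + 1)) d := fun j hj d h =>
      (h.update fun _ => (Option.some_ne_none _).symm).update fun h' => absurd h' (hnot j hj)
    have hfan₁ : IsFan c₁ φ x (y ∘ Nat.succ) m := by
      refine ⟨fun i hi j hj h => Nat.succ_injective (hfan.1 (by simpa using hi)
        (by simpa using hj) h), fun j hj => ?_⟩
      have h0 : s(x, y (j + 2)) ≠ s(x, y 0) :=
        fun h => hfan.ne_of_lt (by omega) (by omega) (Sym2.congr_right.1 h).symm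
      have h1 : s(x, y (j + 2)) ≠ s(x, y 1) :=
        fun h => hfan.ne_of_lt (by omega) (by omega) (Sym2.congr_right.1 h).symm
      simp only [c₁, comp_apply, Nat.succ_eq_add_one, update_of_ne h0, update_of_ne h1]
      exact hfan.2 (j + 1) (by omega)
    have hx₁ : IsMissingColor c₁ x a :=
      (hx.update fun _ => (Option.some_ne_none _).symm).update
        fun _ h => hx (y 1) (h1.trans (Option.some_inj.2 (Option.some_inj.1 h)))
    obtain ⟨c', hc', hsub⟩ := ih hc₁ hfan₁ (fun j hj => hmiss j (by omega) _ (hφ _ (by omega)))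
      (hc.adj h1) hx₁ (hmiss m le_rfl a hy)
    refine ⟨c', hc', ?_⟩
    rintro e (rfl | he)
    · exact hsub (Set.mem_insert_of_mem _ (insert_coloredEdges_subset_update _ _
        (Set.mem_insert _ _)))
    by_cases h : e = s(x, y 1)
    · exact hsub (h ▸ Set.mem_insert _ _)
    · refine hsub (Set.mem_insert_of_mem _ (insert_coloredEdges_subset_update _ _
        (Set.mem_insert_of_mem _ ?_)))
      show update c s(x, y 1) none e ≠ none
      rwa [update_of_ne h]

theorem IsFan.add_one_le_card [Finite V] (hfan : IsFan c φ x y m) : m + 1 ≤ Nat.card V := by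
  simpa using Nat.card_le_card_of_injective (fun j : Fin (m + 1) => y j)
    fun i j h => Fin.ext (hfan.1 (Set.mem_Iic.2 (Nat.le_of_lt_succ i.2))
      (Set.mem_Iic.2 (Nat.le_of_lt_succ j.2)) h)

theorem exists_isFan_maximal [Finite V] (c : Sym2 V → Option α) (φ : V → α) (x z : V) :
    ∃ (m : ℕ) (y : ℕ → V), y 0 = z ∧ IsFan c φ x y m ∧
      (IsMissingColor c x (φ (y m)) ∨ ∃ i ≤ m, c s(x, y i) = some (φ (y m))) := by
  set S := {m | ∃ y : ℕ → V, y 0 = z ∧ IsFan c φ x y m}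
  have hS : S.Nonempty := ⟨0, fun _ => z, rfl, fun i hi j hj _ => by simp_all, by simp⟩
  have hbdd : BddAbove S := ⟨Nat.card V, fun m ⟨y, _, hfan⟩ => by
    have := hfan.add_one_le_card; omega⟩
  obtain ⟨y, hy0, hfan⟩ := Nat.sSup_mem hS hbdd
  refine ⟨sSup S, y, hy0, hfan, ?_⟩
  by_contra! h
  obtain ⟨hmiss, hused⟩ := h
  obtain ⟨w, hw⟩ : ∃ w, c s(x, w) = some (φ (y (sSup S))) := by
    simpa [IsMissingColor] using hmiss
  have hnew : ∀ i ≤ sSup S, y i ≠ w := fun i hi h => hused i hi (h ▸ hw)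
  classical
  have hfan' : IsFan c φ x (update y (sSup S + 1) w) (sSup S + 1) := by
    refine ⟨fun i hi j hj h => ?_, fun j hj => ?_⟩
    · simp only [Set.mem_Iic] at hi hj
      rcases hi.lt_or_eq with hi | rfl <;> rcases hj.lt_or_eq with hj | rfl
      · rw [update_of_ne hi.ne, update_of_ne hj.ne] at h
        exact hfan.1 (Nat.le_of_lt_succ hi) (Nat.le_of_lt_succ hj) h
      · rw [update_of_ne hi.ne, update_self] at h
        exact absurd h (hnew i (Nat.le_of_lt_succ hi))
      · rw [update_of_ne hj.ne, update_self] at h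
        exact absurd h.symm (hnew j (Nat.le_of_lt_succ hj))
      · rfl
    · rw [update_of_ne (by omega : j ≠ sSup S + 1)]
      rcases (Nat.le_of_lt_succ hj).lt_or_eq with hj | rfl
      · rw [update_of_ne (by omega : j + 1 ≠ sSup S + 1)]
        exact hfan.2 j hj
      · rwa [update_self]
  have := le_csSup hbdd ⟨_, by rw [update_of_ne (by omega)]; exact hy0, hfan'⟩
  omega

/-- Its components are the Kempe chains. -/
def kempeGraph (c : Sym2 V → Option α) (a b : α) : SimpleGraph V :=
  fromEdgeSet {e | c e = some a ∨ c e = some b}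

theorem kempeGraph_adj :
    (kempeGraph c a b).Adj u w ↔ (c s(u, w) = some a ∨ c s(u, w) = some b) ∧ u ≠ w :=
  fromEdgeSet_adj _

theorem IsPartialEdgeColoring.card_le_one (hc : G.IsPartialEdgeColoring c) {s : Finset V}
    (hs : ∀ w ∈ s, c s(u, w) = some d) : #s ≤ 1 :=
  Finset.card_le_one.2 fun _ hw _ hw' => hc.eq_of_eq_some (hs _ hw) (hs _ hw')

theorem IsPartialEdgeColoring.degree_kempeGraph_le_two (hc : G.IsPartialEdgeColoring c) (v : V)
    [Fintype ((kempeGraph c a b).neighborSet v)] : (kempeGraph c a b).degree v ≤ 2 := by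
  classical
  rw [← card_neighborFinset_eq_degree,
    ← card_filter_add_card_filter_not (fun w => c s(v, w) = some a)]
  have hb : ∀ w ∈ {w ∈ (kempeGraph c a b).neighborFinset v | ¬c s(v, w) = some a},
      c s(v, w) = some b := fun w hw => by
    simp only [mem_filter, mem_neighborFinset, kempeGraph_adj] at hw
    tauto
  have := hc.card_le_one (u := v) (d := a)
    (s := {w ∈ (kempeGraph c a b).neighborFinset v | c s(v, w) = some a}) (by simp)
  have := hc.card_le_one hb
  omega

theorem IsPartialEdgeColoring.degree_kempeGraph_le_one (hc : G.IsPartialEdgeColoring c) {v : V}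
    [Fintype ((kempeGraph c a b).neighborSet v)]
    (hv : IsMissingColor c v a ∨ IsMissingColor c v b) : (kempeGraph c a b).degree v ≤ 1 := by
  rw [← card_neighborFinset_eq_degree]
  rcases hv with hv | hv
  · refine hc.card_le_one (u := v) (d := b) fun w hw => ?_
    simp only [mem_neighborFinset, kempeGraph_adj] at hw
    exact hw.1.resolve_left (hv w)
  · refine hc.card_le_one (u := v) (d := a) fun w hw => ?_
    simp only [mem_neighborFinset, kempeGraph_adj] at hw
    exact hw.1.resolve_right (hv w)

/-- The handshake lemma against `|V| ≤ |E| + 1`. -/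
theorem Connected.card_filter_degree_le_one_le_two [Fintype V] [DecidableRel G.Adj]
    (hG : G.Connected) (h : ∀ v, G.degree v ≤ 2) : #{v | G.degree v ≤ 1} ≤ 2 := by
  have hsum : ∑ v, G.degree v + #{v | G.degree v ≤ 1} ≤ 2 * Fintype.card V := by
    rw [card_filter, ← sum_add_distrib]
    calc _ ≤ ∑ _ : V, 2 := sum_le_sum fun v _ => by have := h v; split_ifs <;> omega
      _ = 2 * Fintype.card V := by simp [mul_comm]
  have hE := hG.card_vert_le_card_edgeSet_add_one
  rw [sum_degrees_eq_twice_card_edges, edgeFinset_card] at hsum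
  rw [Nat.card_eq_fintype_card, Nat.card_eq_fintype_card] at hE
  omega

theorem not_reachable_of_degree_le_one [Fintype V] [DecidableRel G.Adj]
    (h : ∀ v, G.degree v ≤ 2) {v₁ v₂ v₃ : V} (h₁ : G.degree v₁ ≤ 1) (h₂ : G.degree v₂ ≤ 1)
    (h₃ : G.degree v₃ ≤ 1) (h₁₂ : v₁ ≠ v₂) (h₁₃ : v₁ ≠ v₃) (h₂₃ : v₂ ≠ v₃)
    (h₁₂' : G.Reachable v₁ v₂) : ¬G.Reachable v₁ v₃ := by
  intro h₁₃'
  have := Classical.decEq V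
  set K := G.connectedComponentMk v₁
  have hmem : ∀ {v}, G.Reachable v₁ v → v ∈ K.supp :=
    fun h => (K.mem_supp_iff _).2 (ConnectedComponent.eq.2 h.symm)
  have hK : (G.induce K.supp).Connected := K.connected_toSimpleGraph
  have hdeg : ∀ v : K.supp, (G.induce K.supp).degree v = G.degree v :=
    fun v => degree_induce_of_neighborSet_subset fun w hw =>
      (K.mem_supp_iff _).2 ((ConnectedComponent.eq.2 (Adj.reachable hw).symm).trans
        ((K.mem_supp_iff _).1 v.2))
  have hle := hK.card_filter_degree_le_one_le_two fun v => (hdeg v).trans_le (h v)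
  set T : Finset K.supp := {⟨v₁, hmem .rfl⟩, ⟨v₂, hmem h₁₂'⟩, ⟨v₃, hmem h₁₃'⟩}
  have hT : #T = 3 := card_eq_three.2 ⟨_, _, _, by simpa using h₁₂, by simpa using h₁₃,
    by simpa using h₂₃, rfl⟩
  have hsub : T ⊆ ({v | (G.induce K.supp).degree v ≤ 1} : Finset K.supp) := by
    simp [T, insert_subset_iff, hdeg, h₁, h₂, h₃]
  have := card_le_card hsub
  omega

theorem IsPartialEdgeColoring.not_reachable_kempeGraph [Finite V]
    (hc : G.IsPartialEdgeColoring c) {v₁ v₂ v₃ : V}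
    (h₁ : IsMissingColor c v₁ a ∨ IsMissingColor c v₁ b)
    (h₂ : IsMissingColor c v₂ a ∨ IsMissingColor c v₂ b)
    (h₃ : IsMissingColor c v₃ a ∨ IsMissingColor c v₃ b)
    (h₁₂ : v₁ ≠ v₂) (h₁₃ : v₁ ≠ v₃) (h₂₃ : v₂ ≠ v₃)
    (h₁₂' : (kempeGraph c a b).Reachable v₁ v₂) : ¬(kempeGraph c a b).Reachable v₁ v₃ := by
  have := Fintype.ofFinite V
  have := Classical.decRel (kempeGraph c a b).Adj
  exact not_reachable_of_degree_le_one (fun v => hc.degree_kempeGraph_le_two v)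
    (hc.degree_kempeGraph_le_one h₁) (hc.degree_kempeGraph_le_one h₂)
    (hc.degree_kempeGraph_le_one h₃) h₁₂ h₁₃ h₂₃ h₁₂'

section KempeSwap

variable [DecidableEq α] {z : V}

open Classical in
noncomputable def kempeSwap (c : Sym2 V → Option α) (a b : α) (z : V) : Sym2 V → Option α :=
  fun e => if ∀ v ∈ e, (kempeGraph c a b).Reachable z v then (c e).map (Equiv.swap a b) else c e

theorem kempeSwap_mk_of_reachable (hu : (kempeGraph c a b).Reachable z u) :
    kempeSwap c a b z s(u, w) = (c s(u, w)).map (Equiv.swap a b) := by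
  by_cases hw : (kempeGraph c a b).Reachable z w
  · simp [kempeSwap, hu, hw]
  simp only [kempeSwap, Sym2.forall_mem_pair, hu, hw, and_false, if_false]
  have hab : c s(u, w) ≠ some a ∧ c s(u, w) ≠ some b := by
    by_contra! h
    refine hw (hu.trans (Adj.reachable (kempeGraph_adj.2 ⟨?_, ?_⟩)))
    · by_cases ha : c s(u, w) = some a <;> simp_all
    · rintro rfl
      exact hw hu
  cases hcuw : c s(u, w) with
  | none => rfl
  | some e =>
    rw [hcuw, ne_eq, Option.some_inj, ne_eq, Option.some_inj] at hab
    simp [Equiv.swap_apply_of_ne_of_ne hab.1 hab.2]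

theorem kempeSwap_mk_of_not_reachable (hu : ¬(kempeGraph c a b).Reachable z u) :
    kempeSwap c a b z s(u, w) = c s(u, w) := by
  simp [kempeSwap, hu]

theorem coloredEdges_kempeSwap : coloredEdges (kempeSwap c a b z) = coloredEdges c := by
  ext e
  simp only [coloredEdges, kempeSwap, Set.mem_ofPred_eq]
  split_ifs <;> simp

theorem isPartialEdgeColoring_kempeSwap (hc : G.IsPartialEdgeColoring c) :
    G.IsPartialEdgeColoring (kempeSwap c a b z) where
  mem_edgeSet {e} he := by
    have he' : e ∈ coloredEdges (kempeSwap c a b z) := he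
    rw [coloredEdges_kempeSwap] at he'
    exact hc.mem_edgeSet he'
  eq_of_eq_some {u w w' d} h h' := by
    by_cases hu : (kempeGraph c a b).Reachable z u
    · rw [kempeSwap_mk_of_reachable hu, Option.map_swap_eq_some] at h h'
      exact hc.eq_of_eq_some h h'
    · rw [kempeSwap_mk_of_not_reachable hu] at h h'
      exact hc.eq_of_eq_some h h'

theorem isMissingColor_kempeSwap_iff_of_reachable (hu : (kempeGraph c a b).Reachable z u) :
    IsMissingColor (kempeSwap c a b z) u d ↔ IsMissingColor c u (Equiv.swap a b d) := by
  simp only [IsMissingColor, kempeSwap_mk_of_reachable hu, ne_eq, Option.map_swap_eq_some]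

theorem isMissingColor_kempeSwap_iff_of_not_reachable (hu : ¬(kempeGraph c a b).Reachable z u) :
    IsMissingColor (kempeSwap c a b z) u d ↔ IsMissingColor c u d := by
  simp only [IsMissingColor, kempeSwap_mk_of_not_reachable hu]

theorem IsMissingColor.kempeSwap (h : IsMissingColor c u d) (ha : d ≠ a)
    (hb : d = b → ¬(kempeGraph c a b).Reachable z u) : IsMissingColor (kempeSwap c a b z) u d := by
  by_cases hu : (kempeGraph c a b).Reachable z u
  · rwa [isMissingColor_kempeSwap_iff_of_reachable hu,
      Equiv.swap_apply_of_ne_of_ne ha fun hdb => hb hdb hu]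
  · rwa [isMissingColor_kempeSwap_iff_of_not_reachable hu]

end KempeSwap

/-- After swapping the `a`/`b` chain through `y n`, the colour `a` missing at `x` is missing at
`y n` as well, and the fan up to `y n` survives the swap. -/
theorem IsPartialEdgeColoring.exists_extend_of_kempeSwap [DecidableEq V] [DecidableEq α]
    (hc : G.IsPartialEdgeColoring c) {n : ℕ} (hfan : IsFan c φ x y n)
    (hφ : ∀ v, IsMissingColor c v (φ v)) (hxy : G.Adj x (y 0)) (ha : IsMissingColor c x a)
    (hb : φ (y n) = b) (hx : ¬(kempeGraph c a b).Reachable (y n) x)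
    (hchain : ∀ j < n, φ (y j) = b → ¬(kempeGraph c a b).Reachable (y n) (y j)) :
    ∃ c' : Sym2 V → Option α, G.IsPartialEdgeColoring c' ∧
      insert s(x, y 0) (coloredEdges c) ⊆ coloredEdges c' := by
  have hfan' : IsFan (kempeSwap c a b (y n)) φ x y n :=
    ⟨hfan.1, fun j hj => (kempeSwap_mk_of_not_reachable hx).trans (hfan.2 j hj)⟩
  have hφ' : ∀ j < n, IsMissingColor (kempeSwap c a b (y n)) (y j) (φ (y j)) :=
    fun j hj => (hφ _).kempeSwap (fun h => ha _ (h ▸ hfan.2 j hj)) (hchain j hj)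
  have hx' := (isMissingColor_kempeSwap_iff_of_not_reachable hx).2 ha
  have hy' : IsMissingColor (kempeSwap c a b (y n)) (y n) a := by
    rw [isMissingColor_kempeSwap_iff_of_reachable .rfl, Equiv.swap_apply_left, ← hb]
    exact hφ _
  simpa only [coloredEdges_kempeSwap] using
    (isPartialEdgeColoring_kempeSwap hc).exists_extend_of_isFan hfan' hφ' hxy hx' hy'

theorem IsPartialEdgeColoring.exists_extend [Fintype V] [DecidableRel G.Adj] [Fintype α]
    (hc : G.IsPartialEdgeColoring c) (hdeg : ∀ v, G.degree v < Fintype.card α) {z : V}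
    (hxz : G.Adj x z) (hnone : c s(x, z) = none) :
    ∃ c' : Sym2 V → Option α, G.IsPartialEdgeColoring c' ∧
      insert s(x, z) (coloredEdges c) ⊆ coloredEdges c' := by
  classical
  choose φ hφ using fun v => hc.exists_isMissingColor (hdeg v)
  obtain ⟨m, y, rfl, hfan, hx | ⟨i, him, hi⟩⟩ := exists_isFan_maximal c φ x z
  · exact hc.exists_extend_of_isFan hfan (fun _ _ => hφ _) hxz hx (hφ _)
  -- `φ (y m)` is already used at `x`, on the fan edge `x (y (i + 1))`
  obtain ⟨i, rfl⟩ : ∃ i', i = i' + 1 :=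
    Nat.exists_eq_succ_of_ne_zero fun h => by simp [h, hnone] at hi
  have hbi : φ (y i) = φ (y m) := Option.some_injective _ ((hfan.2 i (by omega)).symm.trans hi)
  have hb : ∀ j < m, φ (y j) = φ (y m) → j = i := fun j hj h => by
    have := hc.eq_of_eq_some (hfan.2 j hj) (h ▸ hi)
    by_contra hji
    rcases Nat.lt_or_gt_of_ne hji with hji | hji
    · exact hfan.ne_of_lt (by omega) him this
    · exact hfan.ne_of_lt (by omega) (by omega) this.symm
  have hyx : ∀ {j}, j ≤ m → y j ≠ x := fun {j} hj => by
    rcases j with _ | j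
    · exact hxz.ne.symm
    · exact hfan.apply_succ_ne hc hj
  by_cases hreach : (kempeGraph c (φ x) (φ (y m))).Reachable (y i) x
  · have hm : ¬(kempeGraph c (φ x) (φ (y m))).Reachable (y m) x := fun h =>
      hc.not_reachable_kempeGraph (Or.inl (hφ x)) (Or.inr (hbi ▸ hφ (y i)))
        (Or.inr (hφ (y m))) (hyx (by omega)).symm (hyx le_rfl).symm
        (hfan.ne_of_lt (by omega) le_rfl) hreach.symm h.symm
    refine hc.exists_extend_of_kempeSwap hfan hφ hxz (hφ x) rfl hm fun j hj hj' h => ?_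
    obtain rfl := hb j hj hj'
    exact hm (h.trans hreach)
  · exact hc.exists_extend_of_kempeSwap (hfan.mono (by omega)) hφ hxz (hφ x) hbi hreach
      fun j hj hj' => absurd (hb j (by omega) hj') (by omega)

theorem IsPartialEdgeColoring.isProperEdgeColoring (hc : G.IsPartialEdgeColoring c)
    (htot : G.edgeSet ⊆ coloredEdges c) :
    IsProperEdgeColoring G fun e => (c e).get (Option.isSome_iff_ne_none.2 (htot e.2)) := by
  rintro ⟨e₁, h₁⟩ ⟨e₂, h₂⟩ hne ⟨v, hv₁, hv₂⟩ heq
  obtain ⟨w₁, rfl⟩ := Sym2.mem_iff_exists.1 hv₁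
  obtain ⟨w₂, rfl⟩ := Sym2.mem_iff_exists.1 hv₂
  have hw := hc.eq_of_eq_some (Option.some_get _).symm ((Option.some_get _).symm.trans
    (congrArg some heq.symm))
  exact hne (by subst hw; rfl)

theorem exists_isProperEdgeColoring [Fintype V] [DecidableRel G.Adj] [Fintype α]
    (hdeg : ∀ v, G.degree v < Fintype.card α) : ∃ c : G.edgeSet → α, IsProperEdgeColoring G c := by
  have : Nonempty {c : Sym2 V → Option α // G.IsPartialEdgeColoring c} :=
    ⟨⟨_, isPartialEdgeColoring_none⟩⟩
  obtain ⟨⟨c, hc⟩, hmax⟩ :=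
    Finite.exists_max fun c : {c : Sym2 V → Option α // G.IsPartialEdgeColoring c} =>
      (coloredEdges c.1).ncard
  suffices htot : G.edgeSet ⊆ coloredEdges c from ⟨_, hc.isProperEdgeColoring htot⟩
  intro e he
  by_contra hce
  induction e using Sym2.ind with | h x z => ?_
  obtain ⟨c', hc', hsub⟩ := hc.exists_extend hdeg he (not_not.1 hce)
  have hlt : (coloredEdges c).ncard < (coloredEdges c').ncard :=
    Set.ncard_lt_ncard ((Set.ssubset_insert hce).trans_subset hsub)
  exact (hmax ⟨c', hc'⟩).not_gt hlt

end SimpleGraph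

theorem vizing_extend_coloring_general {V : Type*} [Fintype V] (G : SimpleGraph V)
    [DecidableRel G.Adj] {k : ℕ}
    (hdeg : ∀ u, G.degree u ≤ k) :
    ∃ c : G.edgeSet → Fin (k + 1), IsProperEdgeColoring G c :=
  SimpleGraph.exists_isProperEdgeColoring fun u => by simpa [Nat.lt_succ_iff] using hdeg u

/-- If `G` has max degree at most `k` and `G` minus a vertex `v` has a proper
edge coloring with `k + 1` colors, then so does `G`. -/
theorem vizing_extend_coloring {V : Type*} [Fintype V] (G : SimpleGraph V)
    [DecidableRel G.Adj] {k : ℕ} (v : V)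
    (hdeg : ∀ u, G.degree u ≤ k)
    (hcol : ∃ c : (G.induce {v}ᶜ).edgeSet → Fin (k + 1),
      IsProperEdgeColoring (G.induce {v}ᶜ) c) :
    ∃ c : G.edgeSet → Fin (k + 1), IsProperEdgeColoring G c :=
  vizing_extend_coloring_general G hdeg
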